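/- Let 0 ≤ b < a with a ≠ 1 and d > 0. For any digit string u over {0,…,ad−1}, run the division-by-d transducer in base ad starting at state 0: from state i on input digit c, output ⌊(i·ad + c)/d⌋ and go to state (i·ad + c) mod d. Let the run on u end in state j with output string v. If j = 0, then d divides [u] and [v] = [u]/d = f_{a,b,d}([u]). If 0 < j < d, then d does not divide [u], the digit a·j + b is < ad, and [v·(aj+b)] = a·[u] + b = f_{a,b,d}([u]), where v·(aj+b) is v with the digit a·j+b appended. (Here [w] is the value of w in base ad, most significant digit first.) -/
import Mathlib


/-- `f a b d m = m / d` if `d ∣ m`, else `a * m + b`. -/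
def fabd (a b d : ℕ) : ℕ → ℕ := fun m => if d ∣ m then m / d else a * m + b

/-- Deterministic run of the division-by-`d` transducer in base `a`,
returning the final state and the output word. -/
def divRun (a d : ℕ) : ℕ → List ℕ → ℕ × List ℕ
  | i, [] => (i, [])
  | i, c :: u =>
      let p := divRun a d ((i * a + c) % d) u
      (p.1, (i * a + c) / d :: p.2)

/-- Base-`a` value, most significant digit first. -/
def msbVal (a : ℕ) : List ℕ → ℕ
  | [] => 0
  | c :: w => c * a ^ w.length + msbVal a w

lemma divRun_len (A d : ℕ) : ∀ (u : List ℕ) (i : ℕ),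
    ((divRun A d i u).2).length = u.length := by
  intro u
  induction u with
  | nil => intro i; rfl
  | cons c u ih => intro i; simp [divRun, ih]

lemma divRun_key (A d : ℕ) : ∀ (u : List ℕ) (i : ℕ),
    i * A ^ u.length + msbVal A u =
      d * msbVal A (divRun A d i u).2 + (divRun A d i u).1 := by
  intro u
  induction u with
  | nil => intro i; simp [divRun, msbVal]
  | cons c u ih =>
    intro i
    have h := ih ((i * A + c) % d)
    simp only [divRun, msbVal, List.length_cons, divRun_len]
    have e : (i * A + c) = d * ((i * A + c) / d) + (i * A + c) % d :=
      (Nat.div_add_mod _ _).symm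
    calc i * A ^ (u.length + 1) + (c * A ^ u.length + msbVal A u)
        = (i * A + c) * A ^ u.length + msbVal A u := by ring
      _ = (d * ((i * A + c) / d) + (i * A + c) % d) * A ^ u.length + msbVal A u := by
          rw [← e]
      _ = d * ((i * A + c) / d * A ^ u.length) +
            ((i * A + c) % d * A ^ u.length + msbVal A u) := by ring
      _ = d * ((i * A + c) / d * A ^ u.length) +
            (d * msbVal A (divRun A d ((i * A + c) % d) u).2 +
              (divRun A d ((i * A + c) % d) u).1) := by rw [h]
      _ = _ := by ring

lemma msbVal_append (A : ℕ) (x : ℕ) : ∀ w : List ℕ,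
    msbVal A (w ++ [x]) = msbVal A w * A + x := by
  intro w
  induction w with
  | nil => simp [msbVal]
  | cons c w ih => simp [msbVal, ih]; ring

theorem divd_run_realizes_fabd (a b d : ℕ) (ha : 2 ≤ a) (hb : b < a) (hd : 0 < d)
    (u : List ℕ) (hu : ∀ x ∈ u, x < a * d) :
    ((divRun (a * d) d 0 u).1 = 0 →
        d ∣ msbVal (a * d) u ∧
        msbVal (a * d) (divRun (a * d) d 0 u).2 = msbVal (a * d) u / d ∧
        msbVal (a * d) (divRun (a * d) d 0 u).2 = fabd a b d (msbVal (a * d) u)) ∧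
    (0 < (divRun (a * d) d 0 u).1 → (divRun (a * d) d 0 u).1 < d →
        ¬ d ∣ msbVal (a * d) u ∧
        a * (divRun (a * d) d 0 u).1 + b < a * d ∧
        msbVal (a * d) ((divRun (a * d) d 0 u).2 ++ [a * (divRun (a * d) d 0 u).1 + b]) =
          a * msbVal (a * d) u + b ∧
        msbVal (a * d) ((divRun (a * d) d 0 u).2 ++ [a * (divRun (a * d) d 0 u).1 + b]) =
          fabd a b d (msbVal (a * d) u)) := by
  have key := divRun_key (a * d) d u 0
  simp only [Nat.zero_mul, Nat.zero_add] at key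
  set j := (divRun (a * d) d 0 u).1 with hj
  set v := (divRun (a * d) d 0 u).2 with hv
  constructor
  · intro h0
    rw [h0, Nat.add_zero] at key
    have hdvd : d ∣ msbVal (a * d) u := ⟨_, key⟩
    refine ⟨hdvd, ?_, ?_⟩
    · rw [key, Nat.mul_div_cancel_left _ hd]
    · rw [fabd, if_pos hdvd, key, Nat.mul_div_cancel_left _ hd]
  · intro hpos hlt
    have hndvd : ¬ d ∣ msbVal (a * d) u := by
      rw [key]
      intro hdd
      have : d ∣ j := (Nat.dvd_add_right (Dvd.intro _ rfl)).mp hdd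
      exact absurd (Nat.le_of_dvd hpos this) (Nat.not_le_of_lt hlt)
    have hdig : a * j + b < a * d := by
      calc a * j + b ≤ a * (d - 1) + b := by
            have : j ≤ d - 1 := Nat.le_sub_one_of_lt hlt
            exact Nat.add_le_add_right (Nat.mul_le_mul_left a this) b
        _ < a * (d - 1) + a := Nat.add_lt_add_left hb _
        _ = a * (d - 1 + 1) := by ring
        _ = a * d := by rw [Nat.sub_add_cancel hd]
    have happ : msbVal (a * d) (v ++ [a * j + b]) = a * msbVal (a * d) u + b := by
      rw [msbVal_append, key]; ring
    exact ⟨hndvd, hdig, happ, by rw [happ, fabd, if_neg hndvd]⟩
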